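/- Suppose the data satisfy X₊ = AX₋ + BU₋ + EΩ₋ and E₋ = CX₋ + DU₋ + FΩ₋ (error data), and [X₋; U₋; Ω₋] has full row rank n+m+ν. If G ∈ ℝ^(T×ν) satisfies X₊G = X₋GS, E₋G = 0, and Ω₋G = I, then Π := X₋G and Γ := U₋G solve the regulator equations ΠS = AΠ + BΓ + E and 0 = CΠ + DΓ + F. Conversely, any solution (Π, Γ) of the regulator equations arises this way. -/

import Mathlib

/-!
The data equations, multiplied on the right by `G`, become the regulator equations for
`(Π, Γ) = (X₋G, U₋G)` as soon as `Ω₋G = I`: the constraints `X₊G = X₋GS` and `E₋G = 0` are then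
exactly the two regulator equations. Conversely, full row rank of `[X₋; U₋; Ω₋]` makes
`[X₋; U₋; Ω₋] G = [Π; Γ; I]` solvable for every `(Π, Γ)`, and the data equations turn the
regulator equations for `(Π, Γ)` back into the constraints on `G`.
-/

namespace Matrix

variable {K l m n o : Type*}

theorem exists_mul_eq_one_of_rank_eq_card [Field K] [Fintype m] [Fintype n]
    [DecidableEq m] [DecidableEq n] (W : Matrix m n K) (h : W.rank = Fintype.card m) :
    ∃ G : Matrix n m K, W * G = 1 := by
  have hrange : LinearMap.range W.mulVecLin = ⊤ := by
    apply Submodule.eq_top_of_finrank_eq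
    rw [← rank, h, Module.finrank_fintype_fun_eq_card]
  obtain ⟨g, hg⟩ := W.mulVecLin.exists_rightInverse_of_surjective hrange
  refine ⟨LinearMap.toMatrix' g, toLin'.injective ?_⟩
  rw [toLin'_mul, toLin'_toMatrix', toLin'_one, toLin'_apply', hg]

theorem exists_mul_eq_of_rank_eq_card [Field K] [Fintype m] [Fintype n]
    [DecidableEq m] [DecidableEq n] (W : Matrix m n K) (h : W.rank = Fintype.card m)
    (M : Matrix m o K) : ∃ G : Matrix n o K, W * G = M := by
  obtain ⟨G₀, hG₀⟩ := W.exists_mul_eq_one_of_rank_eq_card h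
  exact ⟨G₀ * M, by rw [← Matrix.mul_assoc, hG₀, Matrix.one_mul]⟩

theorem mul_of_eq_add_mul [NonUnitalSemiring K] [Fintype l] [Fintype m] [Fintype n]
    [Fintype o] {ι κ : Type*} {Y : Matrix ι o K} {A : Matrix ι l K} {B : Matrix ι m K}
    {E : Matrix ι n K} {X : Matrix l o K} {U : Matrix m o K} {Ω : Matrix n o K}
    (h : Y = A * X + B * U + E * Ω) (G : Matrix o κ K) :
    Y * G = A * (X * G) + B * (U * G) + E * (Ω * G) := by
  subst h
  simp only [Matrix.add_mul, Matrix.mul_assoc]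

end Matrix

theorem data_driven_regulator_equations
    (n m p ν T : ℕ)
    (A : Matrix (Fin n) (Fin n) ℝ) (B : Matrix (Fin n) (Fin m) ℝ)
    (C : Matrix (Fin p) (Fin n) ℝ) (D : Matrix (Fin p) (Fin m) ℝ)
    (E : Matrix (Fin n) (Fin ν) ℝ) (F : Matrix (Fin p) (Fin ν) ℝ)
    (S : Matrix (Fin ν) (Fin ν) ℝ)
    (Xm Xp : Matrix (Fin n) (Fin T) ℝ) (Um : Matrix (Fin m) (Fin T) ℝ)
    (Ωm : Matrix (Fin ν) (Fin T) ℝ) (Em : Matrix (Fin p) (Fin T) ℝ)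
    (hdataX : Xp = A * Xm + B * Um + E * Ωm)
    (hdataE : Em = C * Xm + D * Um + F * Ωm)
    (hrank : (Matrix.fromRows Xm (Matrix.fromRows Um Ωm)).rank = n + m + ν) :
    (∀ G : Matrix (Fin T) (Fin ν) ℝ,
      Xp * G = Xm * G * S → Em * G = 0 → Ωm * G = 1 →
        (Xm * G) * S = A * (Xm * G) + B * (Um * G) + E ∧
        (0 : Matrix (Fin p) (Fin ν) ℝ) = C * (Xm * G) + D * (Um * G) + F) ∧
    (∀ (Pim : Matrix (Fin n) (Fin ν) ℝ) (Γ : Matrix (Fin m) (Fin ν) ℝ),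
      Pim * S = A * Pim + B * Γ + E →
      (0 : Matrix (Fin p) (Fin ν) ℝ) = C * Pim + D * Γ + F →
        ∃ G : Matrix (Fin T) (Fin ν) ℝ,
          Xp * G = Xm * G * S ∧ Em * G = 0 ∧ Ωm * G = 1 ∧
          Pim = Xm * G ∧ Γ = Um * G) := by
  refine ⟨fun G hshift herr hexo => ?_, fun Pim Γ hregX hregE => ?_⟩
  · exact ⟨by rw [← hshift, Matrix.mul_of_eq_add_mul hdataX, hexo, Matrix.mul_one],
      by rw [← herr, Matrix.mul_of_eq_add_mul hdataE, hexo, Matrix.mul_one]⟩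
  · have hcard : Fintype.card (Fin n ⊕ (Fin m ⊕ Fin ν)) = n + m + ν := by
      simp only [Fintype.card_sum, Fintype.card_fin, Nat.add_assoc]
    obtain ⟨G, hG⟩ := Matrix.exists_mul_eq_of_rank_eq_card _ (hrank.trans hcard.symm)
      (Matrix.fromRows Pim (Matrix.fromRows Γ 1))
    rw [Matrix.fromRows_mul, Matrix.fromRows_mul, Matrix.fromRows_inj.eq_iff,
      Matrix.fromRows_inj.eq_iff] at hG
    obtain ⟨hX, hU, hexo⟩ := hG
    refine ⟨G, ?_, ?_, hexo, hX.symm, hU.symm⟩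
    · rw [Matrix.mul_of_eq_add_mul hdataX, hX, hU, hexo, Matrix.mul_one, hregX]
    · rw [Matrix.mul_of_eq_add_mul hdataE, hX, hU, hexo, Matrix.mul_one, ← hregE]
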